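/- arXiv:2511.02549 — 3 statements merged into one kernel-verified Lean document; each statement's English description precedes it below -/
import Mathlib

section
/- Let k be a field and let X be a scheme separated and of finite type over k which admits a finite stratification X = ⋃_{i=1}^n U_i by locally closed subschemes U_i each of which is a J-linear k-scheme. Then X is J-linear. -/
open AlgebraicGeometry CategoryTheory CategoryTheory.Limits

noncomputable section

/-- The base scheme `Spec k` of a field `k`. -/
def SpecOfField (k : Type) [Field k] : Scheme := Spec (CommRingCat.of k)

/-- Affine `N`-space `𝔸^N_k = Spec k[x₁, …, x_N]`, as a scheme over `Spec k`. -/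
def AffineSpaceOver (k : Type) [Field k] (N : ℕ) : Over (SpecOfField k) :=
  Over.mk (Spec.map (CommRingCat.ofHom (algebraMap k (MvPolynomial (Fin N) k))))

/-- `IsJLinear k n Y` says that the `k`-scheme `Y` is `n`-J-linear:
`Y` is `0`-J-linear if it is empty or isomorphic (as a `k`-scheme) to some `𝔸^N_k`, and
`Y` is `(n+1)`-J-linear if there is a triple `(Z, X, U)` with `Z ↪ X` a closed immersion
with open complement `U = X \ Z` such that either `Y = U` and both `Z` and `X` are
`n`-J-linear, or `Y = X` and both `Z` and `U` are `n`-J-linear. -/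
inductive IsJLinear (k : Type) [Field k] : ℕ → Over (SpecOfField k) → Prop
  | empty (Y : Over (SpecOfField k)) (h : IsEmpty Y.left.carrier) : IsJLinear k 0 Y
  | affine (Y : Over (SpecOfField k)) (N : ℕ) (h : Nonempty (Y ≅ AffineSpaceOver k N)) :
      IsJLinear k 0 Y
  | openCompl (n : ℕ) (Y Z X : Over (SpecOfField k)) (i : Z ⟶ X) (j : Y ⟶ X)
      (hi : IsClosedImmersion i.left) (hj : IsOpenImmersion j.left)
      (hcompl : Set.range j.left.base = (Set.range i.left.base)ᶜ)
      (hZ : IsJLinear k n Z) (hX : IsJLinear k n X) : IsJLinear k (n + 1) Y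
  | closedPart (n : ℕ) (Y Z U : Over (SpecOfField k)) (i : Z ⟶ Y) (j : U ⟶ Y)
      (hi : IsClosedImmersion i.left) (hj : IsOpenImmersion j.left)
      (hcompl : Set.range j.left.base = (Set.range i.left.base)ᶜ)
      (hZ : IsJLinear k n Z) (hU : IsJLinear k n U) : IsJLinear k (n + 1) Y

/-- A `k`-scheme is J-linear if it is `n`-J-linear for some `n ≥ 0`. -/
def IsJLinearScheme (k : Type) [Field k] (Y : Over (SpecOfField k)) : Prop :=
  ∃ n : ℕ, IsJLinear k n Y

/-- A morphism of schemes is a locally closed immersion if it factors as a closed immersion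
followed by an open immersion. -/
def IsLocallyClosedImmersion {X Y : Scheme} (f : X ⟶ Y) : Prop :=
  ∃ (W : Scheme) (g : X ⟶ W) (h : W ⟶ Y), IsClosedImmersion g ∧ IsOpenImmersion h ∧ g ≫ h = f

/-! Induction on the number of strata. A stratum of minimal closure is closed, so `X` is glued
from that closed J-linear stratum and its open complement, and the remaining strata, pulled back
along the open immersion, form a stratification of the complement with one stratum less. -/

open Set

section Stratification

variable {X ι : Type*} [TopologicalSpace X]

structure IsStratification (S : ι → Set X) : Prop where
  isLocallyClosed : ∀ i, IsLocallyClosed (S i)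
  pairwise_disjoint : Pairwise fun i j => Disjoint (S i) (S j)
  iUnion_eq_univ : ⋃ i, S i = univ
  subset_closure_of_inter_closure_nonempty :
    ∀ i j, (S i ∩ closure (S j)).Nonempty → S i ⊆ closure (S j)

namespace IsStratification

variable {S : ι → Set X}

/-- A stratum `S i` with minimal closure is closed: a stratum `S j` meeting `closure (S i)` has the
same closure, so `S i ⊆ closure (S j) \ S j`, which is closed because `S j` is locally closed. -/
theorem exists_isClosed [Finite ι] [Nonempty ι] (hS : IsStratification S) :
    ∃ i, IsClosed (S i) := by
  obtain ⟨i, -, hmin⟩ := Set.finite_univ.exists_minimalFor (fun i => closure (S i)) univ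
    univ_nonempty
  refine ⟨i, closure_subset_iff_isClosed.mp fun x hx => ?_⟩
  obtain ⟨j, hxj⟩ := mem_iUnion.mp (hS.iUnion_eq_univ ▸ mem_univ x)
  by_contra hxi
  have hji : j ≠ i := by rintro rfl; exact hxi hxj
  have hcl_ji : closure (S j) ⊆ closure (S i) :=
    closure_minimal (hS.subset_closure_of_inter_closure_nonempty j i ⟨x, hxj, hx⟩)
      isClosed_closure
  have hSi : S i ⊆ closure (S j) \ S j := fun y hy =>
    ⟨hmin (mem_univ j) hcl_ji (subset_closure hy),
      Set.disjoint_left.mp (hS.pairwise_disjoint hji.symm) hy⟩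
  have hclosed : IsClosed (closure (S j) \ S j) :=
    isOpen_compl_iff.mp (isLocallyClosed_iff_isOpen_coborder.mp (hS.isLocallyClosed j))
  exact (closure_minimal hSi hclosed hx).2 hxj

theorem preimage {Y : Type*} [TopologicalSpace Y] (hS : IsStratification S) {e : Y → X}
    (he : Continuous e) (he' : IsOpenMap e) : IsStratification fun i => e ⁻¹' S i where
  isLocallyClosed i := (hS.isLocallyClosed i).preimage he
  pairwise_disjoint i j hij := (hS.pairwise_disjoint hij).preimage e
  iUnion_eq_univ := by rw [← preimage_iUnion, hS.iUnion_eq_univ, preimage_univ]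
  subset_closure_of_inter_closure_nonempty i j := by
    rw [← he'.preimage_closure_eq_closure_preimage he, ← preimage_inter]
    exact fun ⟨y, hy⟩ => preimage_mono (hS.subset_closure_of_inter_closure_nonempty i j ⟨e y, hy⟩)

theorem subtype_ne (hS : IsStratification S) {i₀ : ι} (h : S i₀ = ∅) :
    IsStratification fun i : {i // i ≠ i₀} => S i where
  isLocallyClosed i := hS.isLocallyClosed i
  pairwise_disjoint i j hij := hS.pairwise_disjoint (Subtype.coe_injective.ne hij)
  iUnion_eq_univ := by
    refine eq_univ_of_forall fun x => ?_
    obtain ⟨i, hx⟩ := mem_iUnion.mp (hS.iUnion_eq_univ ▸ mem_univ x)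
    exact mem_iUnion.mpr ⟨⟨i, by rintro rfl; simp [h] at hx⟩, hx⟩
  subset_closure_of_inter_closure_nonempty i j := hS.subset_closure_of_inter_closure_nonempty i j

end IsStratification

end Stratification

section OpenSubscheme

variable {S : Scheme} {X : Over S}

abbrev openSubschemeOver (V : X.left.Opens) : Over S :=
  Over.mk (V.ι ≫ X.hom)

def openSubschemeOver.ι (V : X.left.Opens) : openSubschemeOver V ⟶ X :=
  Over.homMk V.ι rfl

instance (V : X.left.Opens) : IsOpenImmersion (openSubschemeOver.ι V).left :=
  inferInstanceAs (IsOpenImmersion V.ι)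

lemma openSubschemeOver.range_ι (V : X.left.Opens) :
    range (openSubschemeOver.ι V).left.base = V :=
  Scheme.Opens.range_ι V

def openSubschemeOver.lift {W : Over S} (f : W ⟶ X) {V : X.left.Opens}
    (hf : range f.left.base ⊆ V) : W ⟶ openSubschemeOver V :=
  Over.homMk (V := openSubschemeOver V) (U := W)
    (IsOpenImmersion.lift V.ι f.left (by simpa using hf)) <| by
    simp [openSubschemeOver]

@[simp]
lemma openSubschemeOver.lift_ι {W : Over S} (f : W ⟶ X) {V : X.left.Opens}
    (hf : range f.left.base ⊆ V) :
    openSubschemeOver.lift f hf ≫ openSubschemeOver.ι V = f := by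
  ext1; exact IsOpenImmersion.lift_fac _ _ _

lemma openSubschemeOver.range_lift {W : Over S} (f : W ⟶ X) {V : X.left.Opens}
    (hf : range f.left.base ⊆ V) :
    range (openSubschemeOver.lift f hf).left.base = V.ι.base ⁻¹' range f.left.base := by
  conv_rhs => rw [← openSubschemeOver.lift_ι f hf, Over.comp_left, Scheme.Hom.comp_base,
    TopCat.coe_comp, range_comp]
  exact (preimage_image_eq _ V.ι.isOpenEmbedding.injective).symm

lemma openSubschemeOver.isImmersion_lift {W : Over S} (f : W ⟶ X) [IsImmersion f.left]
    {V : X.left.Opens} (hf : range f.left.base ⊆ V) :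
    IsImmersion (openSubschemeOver.lift f hf).left := by
  have : IsImmersion ((openSubschemeOver.lift f hf).left ≫ (openSubschemeOver.ι V).left) := by
    rwa [← Over.comp_left, openSubschemeOver.lift_ι]
  exact IsImmersion.of_comp _ (openSubschemeOver.ι V).left

end OpenSubscheme

section JLinear

variable {k : Type} [Field k]

/-- An empty scheme is both a closed subscheme of itself and its open complement. -/
theorem IsJLinear.of_isEmpty :
    ∀ (n : ℕ) (Y : Over (SpecOfField k)), IsEmpty Y.left.carrier → IsJLinear k n Y
  | 0, Y, h => .empty Y h
  | n + 1, Y, h => .closedPart n Y Y Y (𝟙 Y) (𝟙 Y) (inferInstanceAs (IsClosedImmersion (𝟙 _)))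
      (inferInstanceAs (IsOpenImmersion (𝟙 _))) (Subsingleton.elim _ _) (of_isEmpty n Y h)
      (of_isEmpty n Y h)

theorem IsJLinear.succ {n : ℕ} {Y : Over (SpecOfField k)} (h : IsJLinear k n Y) :
    IsJLinear k (n + 1) Y := by
  refine .closedPart n Y Y (openSubschemeOver (⊥ : Y.left.Opens)) (𝟙 Y) (openSubschemeOver.ι ⊥)
    (inferInstanceAs (IsClosedImmersion (𝟙 _))) inferInstance ?_ h (.of_isEmpty n _ ?_)
  · rw [openSubschemeOver.range_ι]
    simp
  · show IsEmpty (⊥ : Y.left.Opens)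
    exact ⟨fun x => by simpa using x.2⟩

theorem IsJLinear.mono {m n : ℕ} (hmn : m ≤ n) {Y : Over (SpecOfField k)} (h : IsJLinear k m Y) :
    IsJLinear k n Y := by
  induction n, hmn using Nat.le_induction with
  | base => exact h
  | succ n _ ih => exact ih.succ

theorem IsJLinearScheme.of_isClosedImmersion_of_isOpenImmersion {Y Z U : Over (SpecOfField k)}
    (i : Z ⟶ Y) (j : U ⟶ Y) [IsClosedImmersion i.left] [IsOpenImmersion j.left]
    (hcompl : range j.left.base = (range i.left.base)ᶜ) (hZ : IsJLinearScheme k Z)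
    (hU : IsJLinearScheme k U) : IsJLinearScheme k Y := by
  obtain ⟨m, hm⟩ := hZ
  obtain ⟨l, hl⟩ := hU
  exact ⟨max m l + 1, .closedPart _ Y Z U i j inferInstance inferInstance hcompl
    (hm.mono (le_max_left m l)) (hl.mono (le_max_right m l))⟩

end JLinear

theorem IsJLinearScheme.of_isStratification {k : Type} [Field k] {ι : Type} [Finite ι]
    {X : Over (SpecOfField k)} {W : ι → Over (SpecOfField k)} (f : ∀ i, W i ⟶ X)
    (himm : ∀ i, IsImmersion (f i).left) (hS : IsStratification fun i => range (f i).left.base)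
    (hW : ∀ i, IsJLinearScheme k (W i)) : IsJLinearScheme k X := by
  induction hcard : Nat.card ι generalizing ι X with
  | zero =>
    have : IsEmpty ι := (Nat.card_eq_zero.mp hcard).resolve_right (not_infinite_iff_finite.mpr ‹_›)
    refine ⟨0, .empty X ⟨fun x => ?_⟩⟩
    have hx : x ∈ ⋃ i, range (f i).left.base := hS.iUnion_eq_univ ▸ mem_univ x
    simp at hx
  | succ n ih =>
    have : Nonempty ι := (Nat.card_pos_iff.mp (hcard ▸ n.succ_pos)).1
    obtain ⟨i₀, hclosed⟩ := hS.exists_isClosed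
    have := himm i₀
    have : IsClosedImmersion (f i₀).left := .of_isPreimmersion _ hclosed
    let V : X.left.Opens := ⟨(range (f i₀).left.base)ᶜ, hclosed.isOpen_compl⟩
    have hsub (i : {i // i ≠ i₀}) : range (f i).left.base ⊆ V :=
      (hS.pairwise_disjoint i.2).subset_compl_right
    let f' (i : {i // i ≠ i₀}) := openSubschemeOver.lift (f i) (hsub i)
    have himm' (i : {i // i ≠ i₀}) : IsImmersion (f' i).left :=
      have := himm i; openSubschemeOver.isImmersion_lift _ _
    have hS' : IsStratification fun i => range (f' i).left.base := by
      simp only [f', openSubschemeOver.range_lift]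
      refine (hS.preimage V.ι.continuous V.ι.isOpenEmbedding.isOpenMap).subtype_ne
        (preimage_eq_empty ?_)
      rw [Scheme.Opens.range_ι]
      exact disjoint_compl_right
    have hcard' : Nat.card {i // i ≠ i₀} = n := by
      classical
      have := Fintype.ofFinite ι
      rw [Nat.card_eq_fintype_card, Fintype.card_subtype_compl, Fintype.card_subtype_eq,
        ← Nat.card_eq_fintype_card, hcard]
      rfl
    exact .of_isClosedImmersion_of_isOpenImmersion (f i₀) (openSubschemeOver.ι V)
      (openSubschemeOver.range_ι V) (hW i₀) (ih f' himm' hS' (fun i => hW i) hcard')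

theorem isJLinearScheme_of_finite_stratification_general (k : Type) [Field k]
    (X : Over (SpecOfField k))
    (ι : Type) [Finite ι] (W : ι → Over (SpecOfField k)) (f : ∀ i, W i ⟶ X)
    (himm : ∀ i, IsLocallyClosedImmersion (f i).left)
    (hdisj : Pairwise fun i i' => Disjoint (Set.range (f i).left.base)
      (Set.range (f i').left.base))
    (hcover : ⋃ i, Set.range (f i).left.base = Set.univ)
    (hbdry : ∀ i i',
      (Set.range (f i).left.base ∩ closure (Set.range (f i').left.base)).Nonempty →
      Set.range (f i).left.base ⊆ closure (Set.range (f i').left.base))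
    (hlin : ∀ i, IsJLinearScheme k (W i)) :
    IsJLinearScheme k X := by
  have himm' (i : ι) : IsImmersion (f i).left := IsImmersion.isImmersion_iff_exists.mpr (himm i)
  have hS : IsStratification fun i => range (f i).left.base :=
    ⟨fun i => (f i).left.isLocallyClosed_range, hdisj, hcover, hbdry⟩
  exact .of_isStratification f himm' hS hlin

/-- Let `X` be a scheme, separated and of finite type over a field `k`, which
admits a finite stratification by locally closed J-linear subschemes `W i ↪ X` (pairwise
disjoint locally closed strata covering `X` and satisfying the boundary condition). Then `X`
is J-linear. -/
theorem isJLinearScheme_of_finite_stratification (k : Type) [Field k]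
    (X : Over (SpecOfField k)) [IsSeparated X.hom] [LocallyOfFiniteType X.hom]
    [QuasiCompact X.hom]
    (ι : Type) [Finite ι] (W : ι → Over (SpecOfField k)) (f : ∀ i, W i ⟶ X)
    (himm : ∀ i, IsLocallyClosedImmersion (f i).left)
    (hdisj : Pairwise fun i i' => Disjoint (Set.range (f i).left.base)
      (Set.range (f i').left.base))
    (hcover : ⋃ i, Set.range (f i).left.base = Set.univ)
    (hbdry : ∀ i i',
      (Set.range (f i).left.base ∩ closure (Set.range (f i').left.base)).Nonempty →
      Set.range (f i).left.base ⊆ closure (Set.range (f i').left.base))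
    (hlin : ∀ i, IsJLinearScheme k (W i)) :
    IsJLinearScheme k X :=
  isJLinearScheme_of_finite_stratification_general k X ι W f himm hdisj hcover hbdry hlin
end
end

section
/- Let k be a field, let X be an n-J-linear k-scheme and let Y be an m-J-linear k-scheme. Then the fiber product X ×_k Y is an (n+m)-J-linear k-scheme. -/
open AlgebraicGeometry CategoryTheory CategoryTheory.Limits

noncomputable section

/-- The fiber product `X ×_k Y` of two `k`-schemes, as a `k`-scheme. -/
def fiberProdOver {k : Type} [Field k] (X Y : Over (SpecOfField k)) : Over (SpecOfField k) :=
  Over.mk (pullback.fst X.hom Y.hom ≫ X.hom)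

/-!
Base change along `X ×_k Y → X` preserves closed and open immersions and complements of
images, so a closed/open decomposition of `X` induces one of `X ×_k Y` with the same level
shift. Induction on the J-linear structure of `X`, and then (after swapping the factors) of `Y`,
reduces the theorem to two 0-J-linear factors, where it is
`𝔸^N ×_k 𝔸^M ≅ Spec (k[x] ⊗_k k[y]) ≅ 𝔸^(N+M)`.
-/

section

variable {k : Type} [Field k]

namespace fiberProdOver

def mapLeft {Z W : Over (SpecOfField k)} (f : Z ⟶ W) (Y : Over (SpecOfField k)) :
    fiberProdOver Z Y ⟶ fiberProdOver W Y :=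
  Over.homMk (pullback.map _ _ _ _ f.left (𝟙 _) (𝟙 _) (by simp) (by simp))
    (by dsimp [fiberProdOver]; rw [pullback.lift_fst_assoc, Category.assoc, Over.w])

lemma mapLeft_mem (P : MorphismProperty Scheme) [P.IsStableUnderBaseChange]
    [P.IsMultiplicative] {Z W : Over (SpecOfField k)} {f : Z ⟶ W} (hf : P f.left)
    (Y : Over (SpecOfField k)) : P (mapLeft f Y).left :=
  P.pullbackMap hf (P.id_mem _) (Over.w f).symm (Category.id_comp _).symm

lemma range_mapLeft {Z W : Over (SpecOfField k)} (f : Z ⟶ W) (Y : Over (SpecOfField k)) :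
    Set.range (mapLeft f Y).left.base = pullback.fst W.hom Y.hom ⁻¹' Set.range f.left.base :=
  (Scheme.Pullback.range_map _ _ _ _ f.left (𝟙 Y.left) (𝟙 _) (by simp) (by simp)).trans
    (by simp)

lemma range_mapLeft_eq_compl {Z U W : Over (SpecOfField k)} {i : Z ⟶ W} {j : U ⟶ W}
    (hcompl : Set.range j.left.base = (Set.range i.left.base)ᶜ) (Y : Over (SpecOfField k)) :
    Set.range (mapLeft j Y).left.base = (Set.range (mapLeft i Y).left.base)ᶜ := by
  rw [range_mapLeft, range_mapLeft, hcompl, Set.preimage_compl]; rfl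

def isoProd (X Y : Over (SpecOfField k)) : fiberProdOver X Y ≅ X ⨯ Y :=
  Over.isoMk (Over.prodLeftIsoPullback X Y).symm (by
    dsimp [fiberProdOver]
    rw [← Over.w (prod.fst : X ⨯ Y ⟶ X), Over.prodLeftIsoPullback_inv_fst_assoc])

def commIso (X Y : Over (SpecOfField k)) : fiberProdOver X Y ≅ fiberProdOver Y X :=
  isoProd X Y ≪≫ prod.braiding X Y ≪≫ (isoProd Y X).symm

def congrIso {X X' Y Y' : Over (SpecOfField k)} (eX : X ≅ X') (eY : Y ≅ Y') :
    fiberProdOver X Y ≅ fiberProdOver X' Y' :=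
  isoProd X Y ≪≫ prod.mapIso eX eY ≪≫ (isoProd X' Y').symm

end fiberProdOver

theorem IsJLinear.of_iso {n : ℕ} {Y Y' : Over (SpecOfField k)} (h : IsJLinear k n Y)
    (e : Y ≅ Y') : IsJLinear k n Y' := by
  induction h generalizing Y' with
  | empty Y hY => exact .empty _ (Function.isEmpty e.inv.left.base)
  | affine Y N hY => exact .affine _ N ⟨e.symm ≪≫ hY.some⟩
  | openCompl n Y Z X i j hi hj hcompl hZ hX =>
    have : IsIso e.inv.left := inferInstanceAs (IsIso ((Over.forget _).map e.inv))
    refine .openCompl n Y' Z X i (e.inv ≫ j) hi ?_ ?_ hZ hX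
    · rw [Over.comp_left]; infer_instance
    · rw [Over.comp_left, Scheme.Hom.comp_base, TopCat.coe_comp,
        e.inv.left.surjective.range_comp, hcompl]
  | closedPart n Y Z U i j hi hj hcompl hZ hU =>
    have : IsIso e.hom.left := inferInstanceAs (IsIso ((Over.forget _).map e.hom))
    refine .closedPart n Y' Z U (i ≫ e.hom) (j ≫ e.hom) ?_ ?_ ?_ hZ hU
    · rw [Over.comp_left]; infer_instance
    · rw [Over.comp_left]; infer_instance
    · simp only [Over.comp_left, Scheme.Hom.comp_base, TopCat.coe_comp, Set.range_comp, hcompl,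
        Set.image_compl_eq (ConcreteCategory.bijective_of_isIso e.hom.left.base)]

variable (k) in
abbrev specOver (A : Type) [CommRing A] [Algebra k A] : Over (SpecOfField k) :=
  Over.mk (Spec.map (CommRingCat.ofHom (algebraMap k A)))

def specOverIsoOfAlgEquiv {A B : Type} [CommRing A] [CommRing B] [Algebra k A] [Algebra k B]
    (e : A ≃ₐ[k] B) : specOver k A ≅ specOver k B :=
  Over.isoMk (asIso (Spec.map e.toRingEquiv.toCommRingCatIso.inv)) (by
    change Spec.map _ ≫ Spec.map _ = Spec.map _
    rw [← Spec.map_comp]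
    congr 1
    ext x
    exact e.symm.commutes x)

open TensorProduct in
def fiberProdOverSpecIso (A B : Type) [CommRing A] [CommRing B] [Algebra k A] [Algebra k B] :
    fiberProdOver (specOver k A) (specOver k B) ≅ specOver k (A ⊗[k] B) :=
  Over.isoMk (pullbackSpecIso k A B) (pullbackSpecIso_hom_base k A B)

def fiberProdOverAffineSpaceIso (N M : ℕ) :
    fiberProdOver (AffineSpaceOver k N) (AffineSpaceOver k M) ≅ AffineSpaceOver k (N + M) :=
  fiberProdOverSpecIso _ _ ≪≫ specOverIsoOfAlgEquiv
    ((MvPolynomial.tensorEquivSum k (Fin N) (Fin M) k).trans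
      (MvPolynomial.renameEquiv k finSumFinEquiv))

theorem IsJLinear.fiberProdOver_zero {X Y : Over (SpecOfField k)} (hX : IsJLinear k 0 X)
    (hY : IsJLinear k 0 Y) : IsJLinear k 0 (fiberProdOver X Y) := by
  cases hX with
  | empty _ hX => exact .empty _ (Function.isEmpty (pullback.fst X.hom Y.hom).base)
  | affine _ N eX =>
    cases hY with
    | empty _ hY => exact .empty _ (Function.isEmpty (pullback.snd X.hom Y.hom).base)
    | affine _ M eY =>
      exact .affine _ (N + M)
        ⟨fiberProdOver.congrIso eX.some eY.some ≪≫ fiberProdOverAffineSpaceIso N M⟩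

theorem IsJLinear.fiberProdOver_of_forall_zero {n m : ℕ} {X : Over (SpecOfField k)}
    (hX : IsJLinear k n X) {Y : Over (SpecOfField k)}
    (hbase : ∀ X₀, IsJLinear k 0 X₀ → IsJLinear k m (fiberProdOver X₀ Y)) :
    IsJLinear k (n + m) (fiberProdOver X Y) := by
  induction hX with
  | empty X₀ h => simpa using hbase X₀ (.empty X₀ h)
  | affine X₀ N h => simpa using hbase X₀ (.affine X₀ N h)
  | openCompl n _ Z W i j hi hj hcompl _ _ ihZ ihW =>
    rw [Nat.add_right_comm]
    exact .openCompl _ _ _ _ (fiberProdOver.mapLeft i Y) (fiberProdOver.mapLeft j Y)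
      (fiberProdOver.mapLeft_mem _ hi Y) (fiberProdOver.mapLeft_mem _ hj Y)
      (fiberProdOver.range_mapLeft_eq_compl hcompl Y) ihZ ihW
  | closedPart n _ Z U i j hi hj hcompl _ _ ihZ ihU =>
    rw [Nat.add_right_comm]
    exact .closedPart _ _ _ _ (fiberProdOver.mapLeft i Y) (fiberProdOver.mapLeft j Y)
      (fiberProdOver.mapLeft_mem _ hi Y) (fiberProdOver.mapLeft_mem _ hj Y)
      (fiberProdOver.range_mapLeft_eq_compl hcompl Y) ihZ ihU

end

/-- If `X` is an `n`-J-linear `k`-scheme and `Y` is an `m`-J-linear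
`k`-scheme, then the fiber product `X ×_k Y` is `(n + m)`-J-linear. -/
theorem isJLinear_fiberProd (k : Type) [Field k] (X Y : Over (SpecOfField k)) (n m : ℕ)
    (hX : IsJLinear k n X) (hY : IsJLinear k m Y) :
    IsJLinear k (n + m) (fiberProdOver X Y) := by
  refine hX.fiberProdOver_of_forall_zero fun X₀ hX₀ ↦ ?_
  have hYX₀ : IsJLinear k (m + 0) (fiberProdOver Y X₀) :=
    hY.fiberProdOver_of_forall_zero fun Y₀ hY₀ ↦ hY₀.fiberProdOver_zero hX₀
  exact hYX₀.of_iso (fiberProdOver.commIso Y X₀)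
end
end

section
/- Let k be a field and let Y be a k-scheme that is n-T-linear for some n ≥ 0. Then Y is J-linear. -/
open AlgebraicGeometry CategoryTheory CategoryTheory.Limits

noncomputable section

/-- `IsTLinear k n Y` says that the `k`-scheme `Y` is `n`-T-linear:
`Y` is `0`-T-linear if it is empty or isomorphic (as a `k`-scheme) to some `𝔸^N_k`, and
`Y` is `(n+1)`-T-linear if either `Y` is the open complement `𝔸^N_k \ Z` of a closed
immersion `Z ↪ 𝔸^N_k` with `Z` `n`-T-linear, or `Y` admits a finite stratification by
`n`-T-linear schemes. -/
inductive IsTLinear (k : Type) [Field k] : ℕ → Over (SpecOfField k) → Prop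
  | empty (Y : Over (SpecOfField k)) (h : IsEmpty Y.left.carrier) : IsTLinear k 0 Y
  | affine (Y : Over (SpecOfField k)) (N : ℕ) (h : Nonempty (Y ≅ AffineSpaceOver k N)) :
      IsTLinear k 0 Y
  | openCompl (n : ℕ) (Y Z : Over (SpecOfField k)) (N : ℕ)
      (i : Z ⟶ AffineSpaceOver k N) (j : Y ⟶ AffineSpaceOver k N)
      (hi : IsClosedImmersion i.left) (hj : IsOpenImmersion j.left)
      (hcompl : Set.range j.left.base = (Set.range i.left.base)ᶜ)
      (hZ : IsTLinear k n Z) : IsTLinear k (n + 1) Y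
  | strat (n : ℕ) (Y : Over (SpecOfField k)) (ι : Type) (hι : Finite ι)
      (W : ι → Over (SpecOfField k)) (f : ∀ i, W i ⟶ Y)
      (himm : ∀ i, IsLocallyClosedImmersion (f i).left)
      (hdisj : Pairwise fun i i' => Disjoint (Set.range (f i).left.base)
        (Set.range (f i').left.base))
      (hcover : ⋃ i, Set.range (f i).left.base = Set.univ)
      (hbdry : ∀ i i',
        (Set.range (f i).left.base ∩ closure (Set.range (f i').left.base)).Nonempty →
        Set.range (f i).left.base ⊆ closure (Set.range (f i').left.base))
      (hW : ∀ i, IsTLinear k n (W i)) : IsTLinear k (n + 1) Y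

/-!
Induct on T-linearity. An open complement `𝔸^N \ Z` is J-linear because `𝔸^N` is. For a finite
stratification, take among the strata of an open union of strata one whose closure is minimal.
By the frontier condition, another stratum meeting that closure lies in it and so has the same
closure; as a locally closed set cannot lie in the closure of a disjoint set lying in its own
closure, no other stratum meets it. So the chosen stratum is closed in the union, and removing it
leaves an open union of fewer strata. Peeling off strata one at a time writes `Y` as iterated
closed/open decompositions into J-linear pieces.
-/

open Function

theorem IsLocallyClosed.eq_empty_of_subset_closure {X : Type*} [TopologicalSpace X]
    {A B : Set X} (hA : IsLocallyClosed A) (hAB : Disjoint A B) (hA_sub : A ⊆ closure B)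
    (hB_sub : B ⊆ closure A) : A = ∅ := by
  have hclosed : IsClosed (closure A \ A) := isOpen_compl_iff.mp hA.isOpen_coborder
  have hB : B ⊆ closure A \ A := fun x hx => ⟨hB_sub hx, fun hxA => hAB.ne_of_mem hxA hx rfl⟩
  have hA' : A ⊆ closure A \ A := hA_sub.trans (closure_minimal hB hclosed)
  exact Set.eq_empty_of_forall_notMem fun x hx => (hA' hx).2 hx

theorem Finset.set_biUnion_sdiff_biUnion_erase {ι X : Type*} [DecidableEq ι] {R : ι → Set X}
    (hdisj : Pairwise (Disjoint on R)) {S : Finset ι} {i : ι} (hi : i ∈ S) :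
    (⋃ j ∈ S, R j) \ ⋃ j ∈ S.erase i, R j = R i := by
  rw [← Finset.insert_erase hi, Finset.set_biUnion_insert, Finset.erase_insert_eq_erase,
    Finset.erase_eq_of_notMem (Finset.notMem_erase i S), Set.union_sdiff_right]
  exact Disjoint.sdiff_eq_left (Set.disjoint_iUnion₂_right.mpr fun j hj =>
    hdisj (Finset.ne_of_mem_erase hj).symm)

theorem exists_isOpen_biUnion_erase {X ι : Type*} [TopologicalSpace X] [DecidableEq ι]
    {R : ι → Set X} (hlc : ∀ i, IsLocallyClosed (R i))
    (hdisj : Pairwise (Disjoint on R))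
    (hbdry : ∀ i j, (R i ∩ closure (R j)).Nonempty → R i ⊆ closure (R j))
    {S : Finset ι} (hS : S.Nonempty) (hopen : IsOpen (⋃ j ∈ S, R j)) :
    ∃ i ∈ S, IsOpen (⋃ j ∈ S.erase i, R j) := by
  obtain ⟨i, hiS, hmin⟩ :=
    (S : Set ι).toFinite.exists_minimalFor (fun j => closure (R j)) _ hS
  have hsep : ∀ j ∈ S, j ≠ i → Disjoint (R j) (closure (R i)) := by
    intro j hj hji
    rw [Set.disjoint_iff_inter_eq_empty]
    by_contra hne
    have hsub := hbdry j i (Set.nonempty_iff_ne_empty.mpr hne)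
    have hcl : closure (R i) ⊆ closure (R j) := hmin hj (closure_minimal hsub isClosed_closure)
    have hempty := (hlc j).eq_empty_of_subset_closure (hdisj hji) hsub (subset_closure.trans hcl)
    simp [hempty] at hne
  refine ⟨i, hiS, ?_⟩
  have : ⋃ j ∈ S.erase i, R j = (⋃ j ∈ S, R j) ∩ (closure (R i))ᶜ := by
    ext x
    simp only [Set.mem_iUnion, Finset.mem_erase, Set.mem_inter_iff, Set.mem_compl_iff]
    constructor
    · rintro ⟨j, ⟨hji, hj⟩, hx⟩
      exact ⟨⟨j, hj, hx⟩, Set.disjoint_left.mp (hsep j hj hji) hx⟩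
    · rintro ⟨⟨j, hj, hx⟩, hxi⟩
      exact ⟨j, ⟨fun hji => hxi (hji ▸ subset_closure hx), hj⟩, hx⟩
  rw [this]
  exact hopen.inter isClosed_closure.isOpen_compl

theorem AlgebraicGeometry.Scheme.Hom.range_eq_preimage_range_comp {X Y Z : Scheme} (g : X ⟶ Y)
    (e : Y ⟶ Z) (he : Function.Injective e.base) :
    Set.range g.base = e.base ⁻¹' Set.range (g ≫ e).base := by
  rw [Scheme.Hom.comp_base, TopCat.coe_comp, Set.range_comp, he.preimage_image]

def overRestrict {S : Scheme} (Y : Over S) (U : Y.left.Opens) : Over S :=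
  Over.mk (U.ι ≫ Y.hom)

namespace IsJLinear

variable {k : Type} [Field k] {n m : ℕ} {Y Z : Over (SpecOfField k)}

theorem of_isEmpty_s10 (h : IsEmpty Y.left) : ∀ n, IsJLinear k n Y
  | 0 => .empty Y h
  | n + 1 => .closedPart n Y Y Y (𝟙 Y) (𝟙 Y) (inferInstanceAs (IsClosedImmersion (𝟙 _)))
      (inferInstanceAs (IsOpenImmersion (𝟙 _))) (Subsingleton.elim _ _)
      (of_isEmpty_s10 h n) (of_isEmpty_s10 h n)

theorem of_isClosedImmersion_of_surjective (i : Z ⟶ Y) [IsClosedImmersion i.left]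
    (hi : Function.Surjective i.left.base) (hZ : IsJLinear k n Z) : IsJLinear k (n + 1) Y := by
  let j : overRestrict Y ⊥ ⟶ Y := Over.homMk (⊥ : Y.left.Opens).ι
  have hempty : IsEmpty (overRestrict Y ⊥).left := ⟨fun x => x.2⟩
  have : IsOpenImmersion j.left := inferInstanceAs (IsOpenImmersion (⊥ : Y.left.Opens).ι)
  exact .closedPart n Y Z _ i j ‹_› ‹_›
    (by rw [hi.range_eq, Set.compl_univ]; exact Set.range_eq_empty _) hZ (of_isEmpty_s10 hempty n)

theorem succ_s10 (h : IsJLinear k n Y) : IsJLinear k (n + 1) Y :=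
  have : IsClosedImmersion (𝟙 Y : Y ⟶ Y).left :=
    inferInstanceAs (IsClosedImmersion (𝟙 Y.left))
  of_isClosedImmersion_of_surjective (𝟙 Y) surjective_id h

theorem mono_s10 (hnm : n ≤ m) (h : IsJLinear k n Y) : IsJLinear k m Y :=
  Nat.le_induction h (fun _ _ => succ_s10) m hnm

end IsJLinear

namespace IsJLinearScheme

variable {k : Type} [Field k] {Y Z U : Over (SpecOfField k)}

theorem closedPart (i : Z ⟶ Y) (j : U ⟶ Y) [IsClosedImmersion i.left] [IsOpenImmersion j.left]
    (hcompl : Set.range j.left.base = (Set.range i.left.base)ᶜ)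
    (hZ : IsJLinearScheme k Z) (hU : IsJLinearScheme k U) : IsJLinearScheme k Y := by
  obtain ⟨p, hp⟩ := hZ
  obtain ⟨q, hq⟩ := hU
  exact ⟨max p q + 1, .closedPart _ Y Z U i j ‹_› ‹_› hcompl
    (hp.mono_s10 (le_max_left p q)) (hq.mono_s10 (le_max_right p q))⟩

theorem openCompl (i : Z ⟶ U) (j : Y ⟶ U) [IsClosedImmersion i.left] [IsOpenImmersion j.left]
    (hcompl : Set.range j.left.base = (Set.range i.left.base)ᶜ)
    (hZ : IsJLinearScheme k Z) (hU : IsJLinearScheme k U) : IsJLinearScheme k Y := by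
  obtain ⟨p, hp⟩ := hZ
  obtain ⟨q, hq⟩ := hU
  exact ⟨max p q + 1, .openCompl _ Y Z U i j ‹_› ‹_› hcompl
    (hp.mono_s10 (le_max_left p q)) (hq.mono_s10 (le_max_right p q))⟩

theorem of_isClosedImmersion_of_surjective (i : Z ⟶ Y) [IsClosedImmersion i.left]
    (hi : Function.Surjective i.left.base) (hZ : IsJLinearScheme k Z) : IsJLinearScheme k Y :=
  have ⟨p, hp⟩ := hZ
  ⟨p + 1, hp.of_isClosedImmersion_of_surjective i hi⟩

theorem overRestrict_of_diff {U U' : Y.left.Opens} (hle : U' ≤ U) {W : Over (SpecOfField k)}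
    (f : W ⟶ Y) [IsImmersion f.left] (hf : Set.range f.left.base = (U : Set Y.left) \ U')
    (hW : IsJLinearScheme k W) (hU' : IsJLinearScheme k (overRestrict Y U')) :
    IsJLinearScheme k (overRestrict Y U) := by
  let ℓ : W.left ⟶ U.toScheme :=
    IsOpenImmersion.lift U.ι f.left (by rw [hf, U.range_ι]; exact Set.sdiff_subset)
  have hℓ : ℓ ≫ U.ι = f.left := IsOpenImmersion.lift_fac _ _ _
  have hinj : Function.Injective U.ι.base := U.ι.isOpenEmbedding.injective
  have hrange : Set.range (Y.left.homOfLE hle).base = (Set.range ℓ.base)ᶜ := by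
    rw [ℓ.range_eq_preimage_range_comp _ hinj,
      Scheme.Hom.range_eq_preimage_range_comp _ _ hinj, hℓ, hf,
      Scheme.homOfLE_ι, U'.range_ι]
    ext x
    simp only [Set.mem_preimage, Set.mem_compl_iff, Set.mem_sdiff, not_and, not_not]
    exact ⟨fun h _ => h, fun h => h x.2⟩
  have : IsPreimmersion (ℓ ≫ U.ι) := hℓ ▸ inferInstance
  have : IsPreimmersion ℓ := .of_comp ℓ U.ι
  have : IsClosedImmersion ℓ := .of_isPreimmersion ℓ <| by
    rw [← compl_compl (Set.range _), ← hrange]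
    exact (Y.left.homOfLE hle).isOpenEmbedding.isOpen_range.isClosed_compl
  let i : W ⟶ overRestrict Y U := Over.homMk ℓ <| by
    simp only [overRestrict, Over.mk_hom]
    rw [reassoc_of% hℓ, Over.w]
  let j : overRestrict Y U' ⟶ overRestrict Y U :=
    Over.homMk (Y.left.homOfLE hle) (by simp [overRestrict])
  have : IsClosedImmersion i.left := inferInstanceAs (IsClosedImmersion ℓ)
  have : IsOpenImmersion j.left := inferInstanceAs (IsOpenImmersion (Y.left.homOfLE hle))
  exact closedPart i j hrange hW hU'

end IsJLinearScheme

theorem IsLocallyClosedImmersion.isImmersion {X Y : Scheme} {f : X ⟶ Y}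
    (hf : IsLocallyClosedImmersion f) : IsImmersion f := by
  obtain ⟨W, g, h, hg, hh, rfl⟩ := hf
  infer_instance

theorem isJLinearScheme_of_stratification {k : Type} [Field k] {Y : Over (SpecOfField k)}
    {ι : Type} [Finite ι] (W : ι → Over (SpecOfField k)) (f : ∀ i, W i ⟶ Y)
    (himm : ∀ i, IsLocallyClosedImmersion (f i).left)
    (hdisj : Pairwise fun i i' => Disjoint (Set.range (f i).left.base)
      (Set.range (f i').left.base))
    (hcover : ⋃ i, Set.range (f i).left.base = Set.univ)
    (hbdry : ∀ i i',
      (Set.range (f i).left.base ∩ closure (Set.range (f i').left.base)).Nonempty →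
      Set.range (f i).left.base ⊆ closure (Set.range (f i').left.base))
    (hW : ∀ i, IsJLinearScheme k (W i)) : IsJLinearScheme k Y := by
  classical
  have := Fintype.ofFinite ι
  have := fun i => (himm i).isImmersion
  have hlc i := (himm i).isImmersion.isLocallyClosed_range
  have key (S : Finset ι) : ∀ U : Y.left.Opens,
      (U : Set Y.left) = ⋃ i ∈ S, Set.range (f i).left.base →
      IsJLinearScheme k (overRestrict Y U) := by
    induction S using Finset.strongInduction with | H S ih => ?_
    intro U hU
    rcases S.eq_empty_or_nonempty with rfl | hS
    · have : IsEmpty (overRestrict Y U).left := ⟨fun x => by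
        have hx : U.ι x ∈ (U : Set Y.left) := x.2
        simp [hU] at hx⟩
      exact ⟨0, .empty _ this⟩
    obtain ⟨i, hi, hopen⟩ := exists_isOpen_biUnion_erase hlc hdisj hbdry hS (hU ▸ U.isOpen)
    have hle : ⟨_, hopen⟩ ≤ U := by
      rw [← SetLike.coe_subset_coe, hU]
      exact Set.biUnion_subset_biUnion_left (Finset.erase_subset i S)
    refine (hW i).overRestrict_of_diff hle (f i) ?_ (ih _ (Finset.erase_ssubset hi) _ rfl)
    rw [hU]
    exact (Finset.set_biUnion_sdiff_biUnion_erase hdisj hi).symm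
  let i : overRestrict Y ⊤ ⟶ Y := Over.homMk (⊤ : Y.left.Opens).ι
  have : IsClosedImmersion i.left := inferInstanceAs (IsClosedImmersion Y.left.topIso.hom)
  exact (key Finset.univ ⊤ (by simpa using hcover.symm)).of_isClosedImmersion_of_surjective i
    fun x => ⟨⟨x, trivial⟩, rfl⟩

/-- Every `n`-T-linear `k`-scheme is J-linear. -/
theorem isJLinearScheme_of_isTLinear (k : Type) [Field k] (Y : Over (SpecOfField k))
    (n : ℕ) (hY : IsTLinear k n Y) : IsJLinearScheme k Y := by
  induction hY with
  | empty Y h => exact ⟨0, .empty Y h⟩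
  | affine Y N h => exact ⟨0, .affine Y N h⟩
  | openCompl n Y Z N i j _ _ hcompl _ hZ =>
    exact hZ.openCompl i j hcompl ⟨0, .affine _ N ⟨Iso.refl _⟩⟩
  | strat n Y ι _ W f himm hdisj hcover hbdry _ hW =>
    exact isJLinearScheme_of_stratification W f himm hdisj hcover hbdry hW
end
end
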